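/- If v is an element of a real inner product space V and x ∈ X ⊂ V satisfies that the pairing of v with x1 ⊗ ... ⊗ x̂i ⊗ ... ⊗ xp is a scalar multiple of xi for each i (one-dimensional alignment condition), then some scalar multiple of x = x1 ⊗ ... ⊗ xp is a critical point of d_v on the manifold of nonzero rank-one tensors. -/

import Mathlib

open BigOperators RealInnerProductSpace Finset

noncomputable section

/-- The rank-one tensor `x₁ ⊗ ⋯ ⊗ x_p`, viewed as a multi-indexed array. -/
def rk1 {p : ℕ} (n : Fin p → ℕ) (x : ∀ i, EuclideanSpace ℝ (Fin (n i))) :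
    EuclideanSpace ℝ (∀ i, Fin (n i)) :=
  WithLp.toLp 2 (fun α => ∏ i, x i (α i))

/-- The contraction `⟨v | x₁ ⊗ ⋯ x̂ᵢ ⋯ ⊗ x_p⟩ ∈ Vᵢ`. -/
def contr {p : ℕ} (n : Fin p → ℕ) (v : EuclideanSpace ℝ (∀ i, Fin (n i)))
    (x : ∀ i, EuclideanSpace ℝ (Fin (n i))) (i : Fin p) :
    EuclideanSpace ℝ (Fin (n i)) :=
  WithLp.toLp 2 (fun a => ∑ α : ∀ j, Fin (n j),
    if α i = a then v α * ∏ j ∈ univ.erase i, x j (α j) else 0)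

open Function

/-! Expanding the definition of `contr`, `⟪v, x₁ ⊗ ⋯ y ⋯ ⊗ x_p⟫ = ⟪⟨v | x₁ ⊗ ⋯ x̂ᵢ ⋯ ⊗ x_p⟩, y⟫`, so under
the alignment condition the residual `v - s • x` (with `x = x₁ ⊗ ⋯ ⊗ x_p`) pairs with the `i`-th
tangent direction as `(cᵢ - s ∏_{j ≠ i} ‖xⱼ‖²) ⟪xᵢ, y⟫`. Choose `s • x` to be the orthogonal
projection of `v` onto `ℝ x`: the residual is then orthogonal to `x`, the direction `y = xᵢ`, so
`‖xᵢ‖²` times the coefficient vanishes, and hence so does `⟪xᵢ, y⟫` times it, for every `y`. -/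

lemma EuclideanSpace.real_inner_eq_sum {ι : Type*} [Fintype ι] (u w : EuclideanSpace ℝ ι) :
    ⟪u, w⟫ = ∑ α, u α * w α := by
  simp [PiLp.inner_apply, mul_comm]

lemma real_inner_sub_div_norm_sq_smul_self {E : Type*} [NormedAddCommGroup E]
    [InnerProductSpace ℝ E] (u v : E) : ⟪v - (⟪u, v⟫ / ‖u‖ ^ 2) • u, u⟫ = 0 := by
  have h := Submodule.starProjection_inner_eq_zero (K := ℝ ∙ u) v u
    (Submodule.mem_span_singleton_self u)
  rwa [Submodule.starProjection_singleton] at h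

section RankOne

variable {p : ℕ} {n : Fin p → ℕ}

lemma prod_update_apply (x : ∀ i, EuclideanSpace ℝ (Fin (n i))) (i : Fin p)
    (y : EuclideanSpace ℝ (Fin (n i))) (α : ∀ j, Fin (n j)) :
    ∏ j, update x i y j (α j) = y (α i) * ∏ j ∈ univ.erase i, x j (α j) := by
  rw [← mul_prod_erase univ _ (mem_univ i), update_self]
  congr 1
  exact prod_congr rfl fun j hj => by rw [update_of_ne (ne_of_mem_erase hj)]

lemma inner_rk1_update (v : EuclideanSpace ℝ (∀ i, Fin (n i)))
    (x : ∀ i, EuclideanSpace ℝ (Fin (n i))) (i : Fin p) (y : EuclideanSpace ℝ (Fin (n i))) :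
    ⟪v, rk1 n (update x i y)⟫ = ⟪contr n v x i, y⟫ := by
  simp only [EuclideanSpace.real_inner_eq_sum, rk1, contr, sum_mul, ite_mul, zero_mul]
  rw [sum_comm]
  simp only [sum_ite_eq, mem_univ, if_true, prod_update_apply]
  exact sum_congr rfl fun α _ => by ring

lemma inner_rk1_rk1 (x z : ∀ i, EuclideanSpace ℝ (Fin (n i))) :
    ⟪rk1 n x, rk1 n z⟫ = ∏ i, ⟪x i, z i⟫ := by
  simp only [EuclideanSpace.real_inner_eq_sum, rk1, ← prod_mul_distrib, prod_univ_sum,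
    Fintype.piFinset_univ]

lemma inner_rk1_rk1_update (x : ∀ i, EuclideanSpace ℝ (Fin (n i))) (i : Fin p)
    (y : EuclideanSpace ℝ (Fin (n i))) :
    ⟪rk1 n x, rk1 n (update x i y)⟫ = ⟪x i, y⟫ * ∏ j ∈ univ.erase i, ⟪x j, x j⟫ := by
  rw [inner_rk1_rk1, ← mul_prod_erase univ _ (mem_univ i), update_self]
  congr 1
  exact prod_congr rfl fun j hj => by rw [update_of_ne (ne_of_mem_erase hj)]

lemma inner_sub_smul_rk1_update {v : EuclideanSpace ℝ (∀ i, Fin (n i))}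
    {x : ∀ i, EuclideanSpace ℝ (Fin (n i))} {i : Fin p} {c : ℝ}
    (hc : contr n v x i = c • x i) (s : ℝ) (y : EuclideanSpace ℝ (Fin (n i))) :
    ⟪v - s • rk1 n x, rk1 n (update x i y)⟫ =
      (c - s * ∏ j ∈ univ.erase i, ⟪x j, x j⟫) * ⟪x i, y⟫ := by
  rw [inner_sub_left, real_inner_smul_left, inner_rk1_update, hc, real_inner_smul_left,
    inner_rk1_rk1_update]
  ring

end RankOne


theorem scalar_multiple_critical_general {p : ℕ} (n : Fin p → ℕ)
    (v : EuclideanSpace ℝ (∀ i, Fin (n i)))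
    (x : ∀ i, EuclideanSpace ℝ (Fin (n i)))
    (halign : ∀ i, ∃ c : ℝ, contr n v x i = c • x i) :
    ∃ s : ℝ, ∀ (i : Fin p) (y : EuclideanSpace ℝ (Fin (n i))),
      ⟪v - s • rk1 n x, rk1 n (Function.update x i y)⟫ = 0 := by
  choose c hc using halign
  set u := rk1 n x
  refine ⟨⟪u, v⟫ / ‖u‖ ^ 2, fun i y => ?_⟩
  have hself := inner_sub_smul_rk1_update (hc i) (⟪u, v⟫ / ‖u‖ ^ 2) (x i)
  rw [update_eq_self, real_inner_sub_div_norm_sq_smul_self, eq_comm, mul_eq_zero,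
    inner_self_eq_zero] at hself
  rw [inner_sub_smul_rk1_update (hc i)]
  rcases hself with hcoef | hxi
  · rw [hcoef, zero_mul]
  · rw [hxi, inner_zero_left, mul_zero]

/-- If for each `i` the contraction of `v` with `x₁ ⊗ ⋯ x̂ᵢ ⋯ ⊗ x_p` is a scalar multiple
of `xᵢ`, then some scalar multiple of `x₁ ⊗ ⋯ ⊗ x_p` is a critical point of `d_v`, i.e.
`v - s • (x₁ ⊗ ⋯ ⊗ x_p)` is orthogonal to the tangent space of the manifold of nonzero
rank-one tensors (spanned by the tensors with one factor replaced). -/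
theorem scalar_multiple_critical {p : ℕ} (n : Fin p → ℕ)
    (v : EuclideanSpace ℝ (∀ i, Fin (n i)))
    (x : ∀ i, EuclideanSpace ℝ (Fin (n i))) (hx : ∀ i, x i ≠ 0)
    (halign : ∀ i, ∃ c : ℝ, contr n v x i = c • x i) :
    ∃ s : ℝ, ∀ (i : Fin p) (y : EuclideanSpace ℝ (Fin (n i))),
      ⟪v - s • rk1 n x, rk1 n (Function.update x i y)⟫ = 0 :=
  scalar_multiple_critical_general n v x halign
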